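/- Let n | q + 1, δ odd, b coprime to n, and α a primitive n-th root of unity in F_{q^2}. Let A = {α^t, α^{t+b}, ..., α^{t+(m-1)b}} ∪ {α^{t+i_1 b}, ..., α^{t+i_s b}} with m-1+δ ≤ i_1 < ... < i_s ≤ n - δ and i_{ℓ+1} - i_ℓ ≥ δ, and B = {α^{-(δ-3)b/2}, ..., α^{-b}, α^0, α^b, ..., α^{(δ-1)b/2}}. If the exponent set of AB is a union of q-cyclotomic cosets modulo n, then the cyclic code C_{AB} of length n over F_q with complete defining set AB is a cyclic (d_A⊥ - δ + 1, δ)-LRC with dimension k = n - m + 1 - (s+1)(δ-1); moreover if ⌈k/r⌉ = s + 1 with r = d_A⊥ - δ + 1, then C_{AB} is optimal with minimum distance m + δ - 1. -/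

import Mathlib

noncomputable section

open Polynomial
open scoped Pointwise

/-- The cyclic code of length `n` over `K` whose complete defining set is `Z ⊆ L`,
where `L` is an extension of `K` containing the `n`-th roots of unity:
codewords are those `c` whose associated polynomial vanishes on `Z`. -/
def cyclicCodeOn (K L : Type) [Field K] [Field L] [Algebra K L]
    (n : ℕ) (Z : Set L) : Submodule K (Fin n → K) where
  carrier := {c | ∀ β ∈ Z, ∑ i : Fin n, algebraMap K L (c i) * β ^ (i : ℕ) = 0}
  add_mem' := by
    intro a b ha hb β hβ
    simp only [Pi.add_apply, map_add, add_mul, Finset.sum_add_distrib]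
    rw [ha β hβ, hb β hβ, add_zero]
  zero_mem' := by intro β hβ; simp
  smul_mem' := by
    intro r a ha β hβ
    simp only [Pi.smul_apply, smul_eq_mul, map_mul, mul_assoc, ← Finset.mul_sum]
    rw [ha β hβ, mul_zero]

/-- Cyclic code of length `n` over `F` with complete defining set `Z ⊆ F`. -/
abbrev cyclicCode (F : Type) [Field F] (n : ℕ) (Z : Set F) : Submodule F (Fin n → F) :=
  cyclicCodeOn F F n Z

/-- The dual code of a code `C ⊆ F^n` (under the standard inner product). -/
def dualSet (F : Type) [Field F] (n : ℕ) (C : Set (Fin n → F)) : Set (Fin n → F) :=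
  {v | ∀ c ∈ C, ∑ i : Fin n, v i * c i = 0}

open Classical in
/-- Hamming weight of a vector. -/
def wt {F : Type} [Zero F] {n : ℕ} (c : Fin n → F) : ℕ :=
  (Finset.univ.filter (fun i => c i ≠ 0)).card

/-- `d` is the minimum Hamming distance (= minimum nonzero weight) of the code `C`. -/
def IsMinDist {F : Type} [Zero F] {n : ℕ} (C : Set (Fin n → F)) (d : ℕ) : Prop :=
  (∃ c ∈ C, c ≠ 0 ∧ wt c = d) ∧ ∀ c ∈ C, c ≠ 0 → d ≤ wt c

open Classical in
/-- `C` has `(r, δ)`-locality: every coordinate lies in a recovery set `S` of size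
at most `r + δ - 1` such that the punctured code `C|_S` has minimum distance `≥ δ`. -/
def HasLocality {F : Type} [Zero F] {n : ℕ} (C : Set (Fin n → F)) (r δ : ℕ) : Prop :=
  ∀ i : Fin n, ∃ S : Finset (Fin n), i ∈ S ∧ S.card ≤ r + δ - 1 ∧
    ∀ c ∈ C, ∀ c' ∈ C, (∃ j ∈ S, c j ≠ c' j) →
      δ ≤ (S.filter (fun j => c j ≠ c' j)).card

/-- The polynomial `c₀ + c₁ x + ⋯ + c_{n-1} x^{n-1}` associated to a vector. -/
def vecPoly {F : Type} [Semiring F] {n : ℕ} (c : Fin n → F) : Polynomial F :=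
  ∑ i : Fin n, Polynomial.C (c i) * Polynomial.X ^ (i : ℕ)

/-- The cyclic code of length `n` generated by `g(x)` (a divisor of `x^n - 1`). -/
def codeOfGen (F : Type) [Field F] (n : ℕ) (g : Polynomial F) : Set (Fin n → F) :=
  {c | g ∣ vecPoly c}

/-- Ceiling division `⌈a / b⌉` on naturals. -/
def ceilDiv' (a b : ℕ) : ℕ := (a + b - 1) / b

/-- The code parameters meet the Singleton-like bound for `(r, δ)`-LRCs:
`d = n - k - (⌈k/r⌉ - 1)(δ - 1) + 1`. -/
def SingletonOpt (n k r δ d : ℕ) : Prop :=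
  d = n - k - (ceilDiv' k r - 1) * (δ - 1) + 1

/-!
Put `ζ = α ^ b`, a primitive `n`-th root of unity, and `h = (δ - 3) / 2`. Since `δ` is odd,
`B = ζ⁻ʰ {1, ζ, …, ζ ^ (δ - 2)}`, so `A * B = α ^ t ζ⁻ʰ {ζ ^ u : u ∈ U}`, where `U` is the block
`[0, m + δ - 2)` together with the blocks `[i_l, i_l + δ - 2]`, pairwise disjoint by the gap
conditions. As `A * B` is closed under `q`-th powers, `∏_{β ∈ A * B} (X - β)` has coefficients in
`F_q` and generates `C_{AB}`, so `k = n - |U|`. The first block is a run of `m + δ - 2` consecutive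
roots, so the BCH bound gives `d ≥ m + δ - 1`.

For locality, shift a minimum-weight word `u` of `C_A^⊥` cyclically so that its support `S`, of size
`d_A^⊥`, contains a given coordinate. For `c ∈ C_{AB}` and `e ≤ δ - 2` the word
`(c_j ζ ^ (j (e - h)))_j` lies in `C_A`, because `β ζ ^ (e - h) ∈ A * B` for `β ∈ A`; orthogonality
to `u` is then a Vandermonde system showing that `c` has no or at least `δ` nonzero entries on `S`.
Finally the Singleton-like bound for `(r, δ)`-LRCs, with `⌈k / r⌉ = s + 1`, gives `d ≤ m + δ - 1`.
-/

theorem eq_zero_of_sum_mul_pow_eq_zero {ι R : Type*} [CommRing R] [IsDomain R] {T : Finset ι}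
    {x w : ι → R} (hx : Set.InjOn x T) (h : ∀ e < T.card, ∑ j ∈ T, w j * x j ^ e = 0) :
    ∀ j ∈ T, w j = 0 := by
  set f : Fin T.card ≃ T := T.equivFin.symm
  have hf : Function.Injective fun i => x (f i) := fun i i' hii' =>
    f.injective (Subtype.ext (hx (f i).2 (f i').2 hii'))
  have hw := Matrix.eq_zero_of_forall_pow_sum_mul_pow_eq_zero (v := fun i => w (f i)) hf
    fun e => by
      rw [← h e e.isLt, ← T.sum_coe_sort]
      exact f.sum_comp fun j : T => w j * x j ^ (e : ℕ)
  intro j hj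
  simpa using congrFun hw (f.symm ⟨j, hj⟩)

theorem wt_le_card_of_eq_zero {F : Type} [Zero F] {n : ℕ} {w : Fin n → F} {s : Finset (Fin n)}
    (h : ∀ j ∉ s, w j = 0) : wt w ≤ s.card := by
  classical
  refine Finset.card_le_card fun j hj => ?_
  by_contra hjs
  exact (Finset.mem_filter.mp hj).2 (h j hjs)

theorem eq_zero_of_wt_le_of_sum_mul_pow_eq_zero {R : Type} [CommRing R] [IsDomain R] {n D : ℕ}
    {ζ : R} (hζ : IsPrimitiveRoot ζ n) {w : Fin n → R} (hw : wt w ≤ D)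
    (h : ∀ e < D, ∑ j : Fin n, w j * (ζ ^ e) ^ (j : ℕ) = 0) : w = 0 := by
  classical
  set T := Finset.univ.filter fun j => w j ≠ 0
  have hinj : Set.InjOn (fun j : Fin n => ζ ^ (j : ℕ)) T := fun i _ j _ hij =>
    Fin.ext (hζ.pow_inj i.isLt j.isLt hij)
  have hT : ∀ j ∈ T, w j = 0 := eq_zero_of_sum_mul_pow_eq_zero hinj fun e he => by
    rw [Finset.sum_filter_of_ne fun j _ hj => left_ne_zero_of_mul hj]
    simp_rw [← pow_mul, mul_comm _ e, pow_mul]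
    exact h e (he.trans_le (le_of_eq_of_le (by simp [wt, T]) hw))
  funext j
  by_contra hj
  exact hj (hT j (by simpa [T] using hj))

/-- The BCH bound. -/
theorem lt_wt_of_mul_pow_mem {K L : Type} [Field K] [Field L] [Algebra K L] {n D : ℕ}
    {Z : Set L} {ζ γ : L} (hζ : IsPrimitiveRoot ζ n) (hγ : γ ≠ 0)
    (hZ : ∀ e < D, γ * ζ ^ e ∈ Z) {c : Fin n → K} (hc : c ∈ cyclicCodeOn K L n Z)
    (hc0 : c ≠ 0) : D < wt c := by
  classical
  by_contra! hwt
  set w : Fin n → L := fun j => algebraMap K L (c j) * γ ^ (j : ℕ)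
  have hw : w = 0 := eq_zero_of_wt_le_of_sum_mul_pow_eq_zero hζ
    ((wt_le_card_of_eq_zero (s := Finset.univ.filter fun j => c j ≠ 0) fun j hj => by
      simp_all [w]).trans hwt) fun e he => by
    simpa [w, mul_pow, mul_assoc] using hc _ (hZ e he)
  exact hc0 (funext fun j => by simpa [w, hγ] using congrFun hw j)

theorem wt_comp_equiv {F : Type} [Zero F] {n : ℕ} (w : Fin n → F) (e : Fin n ≃ Fin n) :
    wt (w ∘ e) = wt w := by
  classical
  exact Finset.card_equiv e (by simp)

theorem shift_mem_cyclicCodeOn {K L : Type} [Field K] [Field L] [Algebra K L] {n : ℕ}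
    {Z : Set L} (hZ : ∀ β ∈ Z, β ^ n = 1) {c : Fin n → K} (hc : c ∈ cyclicCodeOn K L n Z)
    (σ : Fin n) : (fun j => c (j + σ)) ∈ cyclicCodeOn K L n Z := by
  have : NeZero n := ⟨(Fin.pos σ).ne'⟩
  intro β hβ
  have hβσ : β ^ (σ : ℕ) ≠ 0 :=
    pow_ne_zero _ fun h0 => by simpa [h0, (Fin.pos σ).ne'] using hZ β hβ
  refine (mul_eq_zero_iff_right hβσ).mp ?_
  rw [Finset.sum_mul, ← hc β hβ]
  refine Fintype.sum_equiv (Equiv.addRight σ) _ _ fun j => ?_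
  rw [Equiv.coe_addRight, Fin.val_add, ← pow_eq_pow_mod _ (hZ β hβ), pow_add, mul_assoc]

theorem shift_mem_dualSet {F : Type} [Field F] {n : ℕ} {C : Set (Fin n → F)} {σ : Fin n}
    (hC : ∀ c ∈ C, (fun j => c (j + σ)) ∈ C) {u : Fin n → F} (hu : u ∈ dualSet F n C) :
    (fun j => u (j - σ)) ∈ dualSet F n C := by
  have : NeZero n := ⟨(Fin.pos σ).ne'⟩
  intro c hc
  rw [← hu _ (hC c hc)]
  exact Fintype.sum_equiv (Equiv.subRight σ) _ _ fun j => by simp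

open Classical in
theorem lt_card_filter_ne_of_mem_dualSet {K L : Type} [Field K] [Field L] [Algebra K L]
    {n D : ℕ} {A Z : Set L} {ζ γ : L} (hζ : IsPrimitiveRoot ζ n) (hγ : γ ≠ 0)
    (hZ : ∀ β ∈ A, ∀ e < D, β * (γ * ζ ^ e) ∈ Z) {u : Fin n → L}
    (hu : u ∈ dualSet L n (cyclicCode L n A)) {S : Finset (Fin n)} (hS : ∀ j, j ∈ S ↔ u j ≠ 0)
    {c c' : Fin n → K} (hc : c ∈ cyclicCodeOn K L n Z) (hc' : c' ∈ cyclicCodeOn K L n Z)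
    (hne : ∃ j ∈ S, c j ≠ c' j) : D < (S.filter fun j => c j ≠ c' j).card := by
  by_contra! hcard
  have hd : c - c' ∈ cyclicCodeOn K L n Z := sub_mem hc hc'
  set w : Fin n → L := fun j => u j * (algebraMap K L ((c - c') j) * γ ^ (j : ℕ))
  have hw : w = 0 := by
    refine eq_zero_of_wt_le_of_sum_mul_pow_eq_zero hζ
      ((wt_le_card_of_eq_zero fun j hj => ?_).trans hcard) fun e he => ?_
    · rw [Finset.mem_filter, hS, not_and_or, not_not, not_not] at hj
      rcases hj with hj | hj <;> simp [w, hj]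
    · have hv : (fun j : Fin n => algebraMap K L ((c - c') j) * (γ * ζ ^ e) ^ (j : ℕ)) ∈
          cyclicCode L n A := fun β hβ => by
        rw [← hd _ (hZ β hβ e he)]
        refine Finset.sum_congr rfl fun j _ => ?_
        simp only [Algebra.algebraMap_self, RingHom.id_apply, mul_pow]
        ring
      rw [← hu _ hv]
      refine Finset.sum_congr rfl fun j _ => ?_
      simp only [w, mul_pow]
      ring
  obtain ⟨j, hjS, hj⟩ := hne
  have := congrFun hw j
  simp only [w, Pi.zero_apply, mul_eq_zero, map_eq_zero_iff _ (algebraMap K L).injective,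
    Pi.sub_apply, sub_eq_zero, pow_eq_zero_iff', hγ, false_and, or_false] at this
  exact this.elim ((hS j).mp hjS) hj

theorem hasLocality_cyclicCodeOn {K L : Type} [Field K] [Field L] [Algebra K L] {n d δ : ℕ}
    {A Z : Set L} {ζ γ : L} (hζ : IsPrimitiveRoot ζ n) (hA : ∀ β ∈ A, β ^ n = 1) (hγ : γ ≠ 0)
    (hZ : ∀ β ∈ A, ∀ e < δ - 1, β * (γ * ζ ^ e) ∈ Z)
    (hd : ∃ u ∈ dualSet L n (cyclicCode L n A), u ≠ 0 ∧ wt u = d) :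
    HasLocality (cyclicCodeOn K L n Z : Set (Fin n → K)) (d - δ + 1) δ := by
  classical
  intro i
  have : NeZero n := ⟨(Fin.pos i).ne'⟩
  obtain ⟨u, hu, hu0, rfl⟩ := hd
  obtain ⟨j₀, hj₀⟩ := Function.ne_iff.mp hu0
  set σ := i - j₀
  have hu' : (fun j => u (j - σ)) ∈ dualSet L n (cyclicCode L n A) :=
    shift_mem_dualSet (fun c hc => shift_mem_cyclicCodeOn hA hc σ) hu
  refine ⟨Finset.univ.filter fun j => u (j - σ) ≠ 0, by simpa [σ] using hj₀, ?_,
    fun c hc c' hc' hne => Nat.le_of_pred_lt <|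
      lt_card_filter_ne_of_mem_dualSet hζ hγ hZ hu' (by simp) hc hc' hne⟩
  exact (wt_comp_equiv u (Equiv.subRight σ)).le.trans (by omega)

theorem mem_range_algebraMap_of_pow_card_eq_self {K L : Type} [Field K] [Fintype K] [Field L]
    [Finite L] [Algebra K L] {x : L} (hx : x ^ Fintype.card K = x) :
    x ∈ Set.range (algebraMap K L) := by
  rw [IsGalois.mem_range_algebraMap_iff_fixed]
  intro f
  obtain ⟨k, rfl⟩ := (FiniteField.bijective_frobeniusAlgEquivOfAlgebraic_pow K L).2 f
  rw [AlgEquiv.coe_pow, FiniteField.coe_frobeniusAlgEquivOfAlgebraic]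
  exact Function.iterate_fixed hx _

theorem exists_monic_map_eq_prod_X_sub_C {K L : Type} [Field K] [Fintype K] [Field L]
    [Finite L] [Algebra K L] {D : Finset L} (hD : ∀ x ∈ D, x ^ Fintype.card K ∈ D) :
    ∃ g : K[X], g.Monic ∧ g.map (algebraMap K L) = ∏ β ∈ D, (X - C β) := by
  classical
  set φ : L →ₐ[K] L := FiniteField.frobeniusAlgHom K L
  have hφD : D.image φ = D := Finset.eq_of_subset_of_card_le
    (Finset.image_subset_iff.mpr hD) (Finset.card_image_of_injective _ φ.injective).ge
  have hfix : (∏ β ∈ D, (X - C β)).map (φ : L →+* L) = ∏ β ∈ D, (X - C β) := by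
    conv_rhs => rw [← hφD, Finset.prod_image (g := ⇑φ) fun x _ y _ h => φ.injective h]
    simp [Polynomial.map_prod]
  have hlifts : ∏ β ∈ D, (X - C β) ∈ lifts (algebraMap K L) :=
    (lifts_iff_coeff_lifts _).mpr fun i => mem_range_algebraMap_of_pow_card_eq_self <| by
      simpa [φ] using congrArg (coeff · i) hfix
  obtain ⟨g, hg, -, hmonic⟩ :=
    lifts_and_degree_eq_and_monic hlifts (monic_prod_of_monic _ _ fun β _ => monic_X_sub_C β)
  exact ⟨g, hmonic, hg⟩

theorem prod_X_sub_C_dvd_iff {R : Type*} [Field R] {D : Finset R} {p : R[X]} :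
    ∏ β ∈ D, (X - C β) ∣ p ↔ ∀ β ∈ D, p.IsRoot β := by
  refine ⟨fun h β hβ => dvd_iff_isRoot.mp
    ((Finset.dvd_prod_of_mem (fun β => X - C β) hβ).trans h), fun h => ?_⟩
  exact Finset.prod_dvd_of_coprime
    ((pairwise_coprime_X_sub_C (s := id) Function.injective_id).set_pairwise _)
    fun β hβ => dvd_iff_isRoot.mpr (h β hβ)

theorem eval_map_vecPoly {K L : Type} [Field K] [Field L] [Algebra K L] {n : ℕ}
    (c : Fin n → K) (β : L) :
    ((vecPoly c).map (algebraMap K L)).eval β =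
      ∑ i : Fin n, algebraMap K L (c i) * β ^ (i : ℕ) := by
  simp [vecPoly, Polynomial.map_sum, eval_finsetSum]

theorem mem_cyclicCodeOn_iff_mem_codeOfGen {K L : Type} [Field K] [Field L] [Algebra K L]
    {n : ℕ} {D : Finset L} {g : K[X]} (hg : g.map (algebraMap K L) = ∏ β ∈ D, (X - C β))
    {c : Fin n → K} : c ∈ cyclicCodeOn K L n D ↔ c ∈ codeOfGen K n g := by
  rw [codeOfGen, Set.mem_ofPred_eq, ← map_dvd_map' (algebraMap K L), hg, prod_X_sub_C_dvd_iff]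
  simp only [IsRoot.def, eval_map_vecPoly]
  rfl

theorem coe_degreeLTEquiv_symm {K : Type} [Field K] {n : ℕ} (c : Fin n → K) :
    ((degreeLTEquiv K n).symm c : K[X]) = vecPoly c := by
  simp [degreeLTEquiv, vecPoly, C_mul_X_pow_eq_monomial]

theorem finrank_eq_of_coe_eq_codeOfGen {K : Type} [Field K] {n : ℕ}
    {C : Submodule K (Fin n → K)} {g : K[X]} (hg : g.Monic) (hgn : g.natDegree ≤ n)
    (hC : (C : Set (Fin n → K)) = codeOfGen K n g) : Module.finrank K C = n - g.natDegree := by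
  set f : (Fin n → K) →ₗ[K] K[X] :=
    modByMonicHom g ∘ₗ (degreeLT K n).subtype ∘ₗ (degreeLTEquiv K n).symm.toLinearMap
  have hker : LinearMap.ker f = C := by
    refine SetLike.coe_injective (hC ▸ Set.ext fun c => ?_)
    simp [f, coe_degreeLTEquiv_symm, codeOfGen, modByMonic_eq_zero_iff_dvd hg]
  have hrange : LinearMap.range f = degreeLT K g.natDegree := by
    refine le_antisymm ?_ fun p hp => ?_
    · rintro _ ⟨c, rfl⟩
      rw [mem_degreeLT, ← degree_eq_natDegree hg.ne_zero]
      exact degree_modByMonic_lt _ hg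
    · have hpn : p ∈ degreeLT K n := degreeLT_mono hgn hp
      refine ⟨degreeLTEquiv K n ⟨p, hpn⟩, ?_⟩
      rw [mem_degreeLT, ← degree_eq_natDegree hg.ne_zero] at hp
      simpa [f] using (modByMonic_eq_self_iff hg).mpr hp
  have := LinearMap.finrank_range_add_finrank_ker f
  rw [hker, hrange, (degreeLTEquiv K _).finrank_eq, Module.finrank_fin_fun,
    Module.finrank_fin_fun] at this
  omega

theorem finrank_cyclicCodeOn {K L : Type} [Field K] [Fintype K] [Field L] [Finite L]
    [Algebra K L] {n : ℕ} {D : Finset L} (hD : ∀ x ∈ D, x ^ Fintype.card K ∈ D)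
    (hDn : D.card ≤ n) : Module.finrank K (cyclicCodeOn K L n D) = n - D.card := by
  obtain ⟨g, hg, hgD⟩ := exists_monic_map_eq_prod_X_sub_C hD
  have hdeg : g.natDegree = D.card := by
    rw [← natDegree_map (algebraMap K L), hgD, natDegree_prod_of_monic _ _
      fun β _ => monic_X_sub_C β]
    simp
  rw [← hdeg] at hDn ⊢
  exact finrank_eq_of_coe_eq_codeOfGen hg hDn
    (Set.ext fun c => mem_cyclicCodeOn_iff_mem_codeOfGen hgD)

theorem Submodule.finrank_le_finrank_inf_ker_add_one {K V : Type*} [Field K] [AddCommGroup V]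
    [Module K V] [FiniteDimensional K V] (s : Submodule K V) (f : V →ₗ[K] K) :
    Module.finrank K s ≤ Module.finrank K (s ⊓ LinearMap.ker f : Submodule K V) + 1 := by
  have h := LinearMap.finrank_range_add_finrank_ker (f.domRestrict s)
  rw [LinearMap.ker_domRestrict, ← Submodule.finrank_map_subtype_eq,
    Submodule.map_comap_subtype] at h
  have := Submodule.finrank_le (LinearMap.range (f.domRestrict s))
  rw [Module.finrank_self] at this
  omega

theorem wt_add_card_le {F : Type} [Zero F] {n : ℕ} {c : Fin n → F} {E : Finset (Fin n)}
    (hc : ∀ j ∈ E, c j = 0) : wt c + E.card ≤ n := by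
  classical
  have := wt_le_card_of_eq_zero (w := c) (s := Finset.univ \ E) fun j hj => hc j (by simpa using hj)
  rw [Finset.card_sdiff_of_subset (Finset.subset_univ E), Finset.card_univ,
    Fintype.card_fin] at this
  have := Finset.card_le_univ E
  rw [Fintype.card_fin] at this
  omega

section SubcodeVanishingOn

variable {K : Type} [Field K] {n : ℕ} (C : Submodule K (Fin n → K))

def subcodeVanishingOn (E : Finset (Fin n)) : Submodule K (Fin n → K) :=
  C ⊓ ⨅ j ∈ E, LinearMap.ker (LinearMap.proj j)

local notation "ν" E:max => Module.finrank K (subcodeVanishingOn C E)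

variable {C}

theorem mem_subcodeVanishingOn {E : Finset (Fin n)} {c : Fin n → K} :
    c ∈ subcodeVanishingOn C E ↔ c ∈ C ∧ ∀ j ∈ E, c j = 0 := by
  simp [subcodeVanishingOn]

variable (C)

theorem subcodeVanishingOn_empty : subcodeVanishingOn C ∅ = C := by
  simp [subcodeVanishingOn]

theorem subcodeVanishingOn_antitone : Antitone (subcodeVanishingOn C) :=
  fun _ _ hEE' _ hc => mem_subcodeVanishingOn.mpr
    ⟨(mem_subcodeVanishingOn.mp hc).1, fun j hj => (mem_subcodeVanishingOn.mp hc).2 j (hEE' hj)⟩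

theorem finrank_subcodeVanishingOn_le_insert (E : Finset (Fin n)) (x : Fin n) :
    ν E ≤ ν (insert x E) + 1 := by
  have h : subcodeVanishingOn C (insert x E) =
      subcodeVanishingOn C E ⊓ LinearMap.ker (LinearMap.proj x) := by
    ext c
    simp only [mem_subcodeVanishingOn, Submodule.mem_inf, LinearMap.mem_ker, LinearMap.proj_apply,
      Finset.mem_insert, forall_eq_or_imp]
    tauto
  rw [h]
  exact Submodule.finrank_le_finrank_inf_ker_add_one _ _

theorem finrank_subcodeVanishingOn_le_union (E G : Finset (Fin n)) :
    ν E ≤ ν (E ∪ G) + G.card := by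
  induction G using Finset.induction with
  | empty => rw [Finset.union_empty]; omega
  | insert x G hx ih =>
    have := finrank_subcodeVanishingOn_le_insert C (E ∪ G) x
    rw [← Finset.union_insert] at this
    rw [Finset.card_insert_of_notMem hx]
    omega

variable {C}

theorem exists_mem_subcodeVanishingOn_ne_zero {E : Finset (Fin n)} (hE : 0 < ν E) :
    ∃ c ∈ subcodeVanishingOn C E, c ≠ 0 :=
  Submodule.exists_mem_ne_zero_of_ne_bot fun h => by rw [h, finrank_bot] at hE; exact hE.false

theorem finrank_subcodeVanishingOn_lt {E E' : Finset (Fin n)} (hEE' : E ⊆ E') {c : Fin n → K}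
    (hc : c ∈ subcodeVanishingOn C E) (hc' : c ∉ subcodeVanishingOn C E') : ν E' < ν E :=
  Submodule.finrank_lt_finrank_of_lt
    (lt_of_le_of_ne (subcodeVanishingOn_antitone C hEE') fun h => hc' (h ▸ hc))

open Classical in
theorem subcodeVanishingOn_union_sdiff {δ : ℕ} {S D : Finset (Fin n)}
    (hS : ∀ c ∈ (C : Set (Fin n → K)), ∀ c' ∈ (C : Set (Fin n → K)), (∃ j ∈ S, c j ≠ c' j) →
      δ ≤ (S.filter fun j => c j ≠ c' j).card)
    (hD : D.card < δ) (E : Finset (Fin n)) :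
    subcodeVanishingOn C (E ∪ (S \ D)) = subcodeVanishingOn C (E ∪ S) := by
  refine le_antisymm (fun c hc => ?_)
    (subcodeVanishingOn_antitone C (Finset.union_subset_union_right Finset.sdiff_subset))
  obtain ⟨hcC, hc0⟩ := mem_subcodeVanishingOn.mp hc
  refine mem_subcodeVanishingOn.mpr ⟨hcC, fun j hj => ?_⟩
  by_contra hcj
  have hsupp : (S.filter fun j => c j ≠ (0 : Fin n → K) j) ⊆ D := fun i hi => by
    by_contra hiD
    obtain ⟨hiS, hci⟩ := Finset.mem_filter.mp hi
    exact hci (hc0 i (by simp [hiS, hiD]))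
  have hjS : j ∈ S := by
    by_contra hjS
    exact hcj (hc0 j (by simpa [hjS] using hj))
  have := hS c hcC 0 C.zero_mem ⟨j, hjS, hcj⟩
  have := Finset.card_le_card hsupp
  omega

theorem exists_wt_add_card_add_finrank_le {E : Finset (Fin n)} (hE : 0 < ν E) :
    ∃ c ∈ C, c ≠ 0 ∧ wt c + E.card + ν E ≤ n + 1 := by
  obtain ⟨v, hv⟩ : ∃ v, ν E = v := ⟨_, rfl⟩
  induction v using Nat.strong_induction_on generalizing E with
  | _ v ih =>
    obtain ⟨c, hc, hc0⟩ := exists_mem_subcodeVanishingOn_ne_zero hE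
    obtain ⟨hcC, hcE⟩ := mem_subcodeVanishingOn.mp hc
    obtain ⟨x, hx⟩ := Function.ne_iff.mp hc0
    by_cases h1 : ν E = 1
    · exact ⟨c, hcC, hc0, by have := wt_add_card_le hcE; omega⟩
    have hxE : x ∉ E := fun h => hx (hcE x h)
    have hlt : ν (insert x E) < ν E := finrank_subcodeVanishingOn_lt (Finset.subset_insert x E) hc
      fun h => hx ((mem_subcodeVanishingOn.mp h).2 x (Finset.mem_insert_self x E))
    have hle := finrank_subcodeVanishingOn_le_insert C E x
    obtain ⟨c', hc', hc'0, hwt⟩ := ih _ (by omega) (E := insert x E) (by omega) rfl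
    rw [Finset.card_insert_of_notMem hxE] at hwt
    exact ⟨c', hc', hc'0, by omega⟩

/-- Take a recovery set `S` of a coordinate where `subcodeVanishingOn C E` is not identically zero.
Vanishing on all but `δ - 1` coordinates of `S` forces vanishing on `S`, so enlarging `E` to `E ∪ S`
lowers the dimension by at most `|S \ E| - (δ - 1) ≤ r`. -/
theorem exists_subcodeVanishingOn_step {r δ : ℕ} (hloc : HasLocality (C : Set (Fin n → K)) r δ)
    (hδ : 0 < δ) {E : Finset (Fin n)} (hE : 0 < ν E) :
    ∃ E', E ⊆ E' ∧ ν E ≤ ν E' + r ∧ E.card + (ν E - ν E') + (δ - 1) ≤ E'.card := by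
  obtain ⟨c, hc, hc0⟩ := exists_mem_subcodeVanishingOn_ne_zero hE
  obtain ⟨x, hx⟩ := Function.ne_iff.mp hc0
  obtain ⟨S, hxS, hScard, hS⟩ := hloc x
  have hlt : ν (E ∪ S) < ν E := finrank_subcodeVanishingOn_lt Finset.subset_union_left hc
    fun h => hx ((mem_subcodeVanishingOn.mp h).2 x (Finset.mem_union_right E hxS))
  have hF : δ - 1 ≤ (S \ E).card := by
    by_contra! h
    have := subcodeVanishingOn_union_sdiff (D := S \ E) hS (by omega) E
    rw [show E ∪ (S \ (S \ E)) = E by ext; simp] at this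
    rw [this] at hlt
    exact lt_irrefl _ hlt
  obtain ⟨D, hDF, hDcard⟩ := Finset.exists_subset_card_eq hF
  have hν := finrank_subcodeVanishingOn_le_union C E ((S \ E) \ D)
  rw [show E ∪ ((S \ E) \ D) = E ∪ (S \ D) by ext; simp; tauto,
    subcodeVanishingOn_union_sdiff hS (by omega) E] at hν
  have hcardES : (E ∪ S).card = E.card + (S \ E).card := by
    rw [← Finset.union_sdiff_self_eq_union, Finset.card_union_of_disjoint Finset.disjoint_sdiff]
  have hFD := Finset.card_sdiff_of_subset hDF
  have hFS := Finset.card_le_card (Finset.sdiff_subset (s := S) (t := E))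
  exact ⟨E ∪ S, Finset.subset_union_left, by omega, by omega⟩

theorem exists_subcodeVanishingOn_iterate {r δ : ℕ}
    (hloc : HasLocality (C : Set (Fin n → K)) r δ) (hδ : 0 < δ) (j : ℕ)
    (hj : j * r < Module.finrank K C) :
    ∃ E, Module.finrank K C ≤ ν E + j * r ∧
      Module.finrank K C - ν E + j * (δ - 1) ≤ E.card := by
  have hνC : ∀ E, ν E ≤ Module.finrank K C := fun E => Submodule.finrank_mono inf_le_left
  induction j with
  | zero =>
    refine ⟨∅, ?_, ?_⟩ <;> rw [subcodeVanishingOn_empty] <;> simp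
  | succ j ih =>
    simp only [add_one_mul] at hj ⊢
    obtain ⟨E, hk, hcard⟩ := ih (by omega)
    obtain ⟨E', hEE', hν, hcard'⟩ := exists_subcodeVanishingOn_step hloc hδ (E := E) (by omega)
    have := Submodule.finrank_mono (subcodeVanishingOn_antitone C hEE')
    have := hνC E
    exact ⟨E', by omega, by omega⟩

variable (C)

/-- The Singleton-like bound for linear codes with `(r, δ)`-locality. -/
theorem exists_wt_le_of_hasLocality {r δ : ℕ} (hloc : HasLocality (C : Set (Fin n → K)) r δ)
    (hδ : 0 < δ) (hk : 0 < Module.finrank K C) :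
    ∃ c ∈ C, c ≠ 0 ∧ wt c ≤ n - Module.finrank K C -
      (ceilDiv' (Module.finrank K C) r - 1) * (δ - 1) + 1 := by
  set k := Module.finrank K C
  have hℓ : ceilDiv' k r - 1 = (k - 1) / r := by
    rcases Nat.eq_zero_or_pos r with rfl | hr
    · simp [ceilDiv']
    · rw [ceilDiv', show k + r - 1 = k - 1 + r by omega, Nat.add_div_right _ hr, Nat.add_sub_cancel]
  have hjr : (k - 1) / r * r < k := (Nat.div_mul_le_self (k - 1) r).trans_lt (by omega)
  obtain ⟨E, hk, hcard⟩ := exists_subcodeVanishingOn_iterate hloc hδ _ hjr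
  obtain ⟨c, hc, hc0, hwt⟩ := exists_wt_add_card_add_finrank_le (C := C) (E := E) (by omega)
  refine ⟨c, hc, hc0, ?_⟩
  rw [hℓ]
  generalize (k - 1) / r * (δ - 1) = X at hcard
  omega

variable {C}

theorem isMinDist_of_hasLocality {r δ d : ℕ} (hloc : HasLocality (C : Set (Fin n → K)) r δ)
    (hδ : 0 < δ) (hk : 0 < Module.finrank K C) (hd : ∀ c ∈ C, c ≠ 0 → d ≤ wt c)
    (hopt : SingletonOpt n (Module.finrank K C) r δ d) : IsMinDist (C : Set (Fin n → K)) d := by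
  obtain ⟨c, hc, hc0, hwt⟩ := exists_wt_le_of_hasLocality C hloc hδ hk
  exact ⟨⟨c, hc, hc0, le_antisymm (hopt ▸ hwt) (hd c hc hc0)⟩, hd⟩

end SubcodeVanishingOn

theorem image_mul_pow_mul_image_mul_pow {M : Type*} [CommMonoid M] (a a' ζ : M) (I J : Set ℕ) :
    (fun i => a * ζ ^ i) '' I * (fun e => a' * ζ ^ e) '' J =
      (fun u => a * a' * ζ ^ u) '' (I + J) := by
  rw [← Set.image2_mul, Set.image2_image_left, Set.image2_image_right, ← Set.image2_add,
    Set.image_image2]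
  refine Set.image2_congr fun i _ e _ => ?_
  rw [pow_add]
  exact mul_mul_mul_comm _ _ _ _

theorem setOf_pow_or_inv_pow_eq_image {L : Type*} [Field L] {ζ : L} (hζ : ζ ≠ 0) {δ : ℕ}
    (hδ : 2 ≤ δ) (hodd : Odd δ) :
    {x : L | (∃ e ≤ (δ - 1) / 2, x = ζ ^ e) ∨ ∃ e ≤ (δ - 3) / 2, x = (ζ ^ e)⁻¹} =
      (fun e => (ζ ^ ((δ - 3) / 2))⁻¹ * ζ ^ e) '' Set.Iio (δ - 1) := by
  obtain ⟨h, rfl⟩ : ∃ h, δ = 2 * h + 3 := by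
    obtain ⟨k, rfl⟩ := hodd
    exact ⟨k - 1, by omega⟩
  rw [show (2 * h + 3 - 1) / 2 = h + 1 by omega, show (2 * h + 3 - 3) / 2 = h by omega,
    show 2 * h + 3 - 1 = 2 * h + 2 by omega]
  have hshift : ∀ e, (ζ ^ h)⁻¹ * ζ ^ (h + e) = ζ ^ e := fun e => by
    rw [pow_add, inv_mul_cancel_left₀ (pow_ne_zero h hζ)]
  have hshift' : ∀ e ≤ h, (ζ ^ h)⁻¹ * ζ ^ (h - e) = (ζ ^ e)⁻¹ := fun e he => by
    obtain ⟨k, rfl⟩ := Nat.exists_eq_add_of_le he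
    rw [Nat.add_sub_cancel_left, pow_add, mul_inv, mul_assoc,
      inv_mul_cancel₀ (pow_ne_zero k hζ), mul_one]
  ext x
  constructor
  · rintro (⟨e, he, rfl⟩ | ⟨e, he, rfl⟩)
    · exact ⟨h + e, by simp; omega, hshift e⟩
    · exact ⟨h - e, by simp; omega, hshift' e he⟩
  · rintro ⟨e, he, rfl⟩
    rcases le_total h e with hle | hle
    · refine Or.inl ⟨e - h, by simp at he; omega, ?_⟩
      rw [← hshift (e - h), Nat.add_sub_cancel' hle]
    · refine Or.inr ⟨h - e, by omega, ?_⟩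
      rw [← hshift' _ (Nat.sub_le h e), Nat.sub_sub_self hle]

def consecutiveBlocks (m δ : ℕ) {s : ℕ} (idx : Fin s → ℕ) : Finset ℕ :=
  Finset.range (m + δ - 2) ∪ Finset.univ.biUnion fun l => Finset.Ico (idx l) (idx l + (δ - 1))

theorem coe_consecutiveBlocks {m δ s : ℕ} (idx : Fin s → ℕ) (hm : 0 < m) (hδ : 2 ≤ δ) :
    (consecutiveBlocks m δ idx : Set ℕ) = ({j | j < m} ∪ Set.range idx) + Set.Iio (δ - 1) := by
  ext u
  simp only [consecutiveBlocks, Finset.coe_union, Finset.coe_range, Finset.coe_biUnion,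
    Finset.coe_univ, Finset.coe_Ico, Set.mem_union, Set.mem_Iio, Set.mem_iUnion, Set.mem_Ico,
    Set.mem_univ, exists_true_left, Set.mem_add, Set.mem_ofPred_eq, Set.mem_range]
  constructor
  · rintro (hu | ⟨l, hl⟩)
    · exact ⟨min u (m - 1), Or.inl (by omega), u - min u (m - 1), by omega, by omega⟩
    · exact ⟨idx l, Or.inr ⟨l, rfl⟩, u - idx l, by omega, by omega⟩
  · rintro ⟨j, hj | ⟨l, rfl⟩, e, he, rfl⟩
    · exact Or.inl (by omega)
    · exact Or.inr ⟨l, by omega⟩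

theorem add_le_of_lt_of_forall_add_le_succ {s δ : ℕ} {f : Fin s → ℕ}
    (hf : ∀ l : Fin s, ∀ hl : (l : ℕ) + 1 < s, f l + δ ≤ f ⟨l + 1, hl⟩) {l l' : Fin s}
    (hll' : l < l') : f l + δ ≤ f l' := by
  obtain ⟨l', hl'⟩ := l'
  induction l' with
  | zero => exact absurd hll' (by simp [Fin.lt_def])
  | succ k ih =>
    have hk : f ⟨k, by omega⟩ + δ ≤ f ⟨k + 1, hl'⟩ := hf ⟨k, by omega⟩ hl'
    rcases Nat.lt_or_ge (l : ℕ) k with h | h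
    · have := ih (by omega) (Fin.lt_def.mpr h)
      omega
    · rwa [show l = ⟨k, by omega⟩ from Fin.ext (by rw [Fin.lt_def] at hll'; simp at hll' ⊢; omega)]

theorem card_consecutiveBlocks {m δ s : ℕ} {idx : Fin s → ℕ} (hlow : ∀ l, m - 1 + δ ≤ idx l)
    (hgap : ∀ l : Fin s, ∀ hl : (l : ℕ) + 1 < s, idx l + δ ≤ idx ⟨l + 1, hl⟩) :
    (consecutiveBlocks m δ idx).card = m + δ - 2 + s * (δ - 1) := by
  have hblocks : ((Finset.univ : Finset (Fin s)) : Set (Fin s)).PairwiseDisjoint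
      fun l => Finset.Ico (idx l) (idx l + (δ - 1)) := by
    intro l _ l' _ hne
    refine Finset.disjoint_left.mpr fun u hu hu' => ?_
    simp only [Finset.mem_Ico] at hu hu'
    rcases lt_or_gt_of_ne hne with h | h
    · have := add_le_of_lt_of_forall_add_le_succ hgap h
      omega
    · have := add_le_of_lt_of_forall_add_le_succ hgap h
      omega
  have hdisj : Disjoint (Finset.range (m + δ - 2))
      (Finset.univ.biUnion fun l => Finset.Ico (idx l) (idx l + (δ - 1))) := by
    refine Finset.disjoint_left.mpr fun u hu hu' => ?_
    simp only [Finset.mem_range, Finset.mem_biUnion, Finset.mem_univ, true_and,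
      Finset.mem_Ico] at hu hu'
    obtain ⟨l, hl⟩ := hu'
    have := hlow l
    omega
  rw [consecutiveBlocks, Finset.card_union_of_disjoint hdisj, Finset.card_range,
    Finset.card_biUnion hblocks]
  simp

theorem consecutiveBlocks_subset_range {m δ s n : ℕ} {idx : Fin s → ℕ} (hs : 0 < s)
    (hδ : 2 ≤ δ) (hlow : ∀ l, m - 1 + δ ≤ idx l) (hupp : ∀ l, idx l ≤ n - δ) :
    consecutiveBlocks m δ idx ⊆ Finset.range (n - 1) := by
  intro u
  have := hlow ⟨0, hs⟩
  have := hupp ⟨0, hs⟩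
  simp only [consecutiveBlocks, Finset.mem_union, Finset.mem_range, Finset.mem_biUnion,
    Finset.mem_univ, true_and, Finset.mem_Ico]
  rintro (hu | ⟨l, hl⟩)
  · omega
  · have := hupp l
    omega

theorem finrank_cyclicCodeOn_image_mul_pow {K L : Type} [Field K] [Fintype K] [Field L]
    [Finite L] [Algebra K L] {n : ℕ} {ζ γ : L} (hζ : IsPrimitiveRoot ζ n) (hγ : γ ≠ 0)
    {U : Finset ℕ} (hU : U ⊆ Finset.range n)
    (hq : ∀ x ∈ (fun u => γ * ζ ^ u) '' U, x ^ Fintype.card K ∈ (fun u => γ * ζ ^ u) '' U) :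
    Module.finrank K (cyclicCodeOn K L n ((fun u => γ * ζ ^ u) '' U)) = n - U.card := by
  classical
  have hinj : Set.InjOn (fun u => γ * ζ ^ u) U := fun u hu v hv huv =>
    hζ.pow_inj (Finset.mem_range.mp (hU hu)) (Finset.mem_range.mp (hU hv))
      (mul_left_cancel₀ hγ huv)
  rw [← Finset.coe_image] at hq ⊢
  rw [finrank_cyclicCodeOn hq, Finset.card_image_of_injOn hinj]
  exact (Finset.card_image_of_injOn hinj).le.trans
    ((Finset.card_le_card hU).trans (Finset.card_range n).le)

theorem stmt15_general (K L : Type) [Field K] [Fintype K] [Field L] [Fintype L] [Algebra K L]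
    (n m s b t δ : ℕ)
    (hn : 0 < n) (hm : 0 < m) (hs : 0 < s) (hδ : 2 ≤ δ) (hδodd : Odd δ)
    (hb : Nat.Coprime b n)
    (α : L) (hα : IsPrimitiveRoot α n)
    (idx : Fin s → ℕ)
    (hlow : ∀ l : Fin s, m - 1 + δ ≤ idx l) (hupp : ∀ l : Fin s, idx l ≤ n - δ)
    (hgap : ∀ l : Fin s, ∀ hl : (l : ℕ) + 1 < s, idx l + δ ≤ idx ⟨(l : ℕ) + 1, hl⟩)
    (A B : Set L)
    (hAdef : A = {x : L | ∃ j < m, x = α ^ (t + j * b)} ∪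
      {x : L | ∃ l : Fin s, x = α ^ (t + idx l * b)})
    (hBdef : B = {x : L | (∃ e ≤ (δ - 1) / 2, x = α ^ (e * b)) ∨
      (∃ e ≤ (δ - 3) / 2, x = (α ^ (e * b))⁻¹)})
    (hcyclo : ∀ x ∈ A * B, x ^ Fintype.card K ∈ A * B)
    (dA : ℕ)
    (hdA : IsMinDist (dualSet L n (cyclicCode L n A : Set (Fin n → L))) dA) :
    HasLocality (cyclicCodeOn K L n (A * B) : Set (Fin n → K)) (dA - δ + 1) δ ∧
    Module.finrank K (cyclicCodeOn K L n (A * B)) = n - m + 1 - (s + 1) * (δ - 1) ∧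
    (ceilDiv' (n - m + 1 - (s + 1) * (δ - 1)) (dA - δ + 1) = s + 1 →
      IsMinDist (cyclicCodeOn K L n (A * B) : Set (Fin n → K)) (m + δ - 1) ∧
      SingletonOpt n (n - m + 1 - (s + 1) * (δ - 1)) (dA - δ + 1) δ (m + δ - 1)) := by
  set ζ := α ^ b
  have hζ : IsPrimitiveRoot ζ n := hα.pow_of_coprime b hb
  have hpow : ∀ e, α ^ (e * b) = ζ ^ e := fun e => by rw [mul_comm, pow_mul]
  set γ' := (ζ ^ ((δ - 3) / 2))⁻¹
  have hγ' : γ' ≠ 0 := inv_ne_zero (pow_ne_zero _ (hζ.ne_zero hn.ne'))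
  have hγ : α ^ t * γ' ≠ 0 := mul_ne_zero (pow_ne_zero t (hα.ne_zero hn.ne')) hγ'
  have hA : A = (fun j => α ^ t * ζ ^ j) '' ({j | j < m} ∪ Set.range idx) := by
    ext x
    simp [hAdef, pow_add, hpow, or_and_right, exists_or, eq_comm]
  have hB : B = (fun e => γ' * ζ ^ e) '' Set.Iio (δ - 1) := by
    simpa only [hBdef, hpow] using setOf_pow_or_inv_pow_eq_image (hζ.ne_zero hn.ne') hδ hδodd
  have hAB : A * B = (fun u => α ^ t * γ' * ζ ^ u) '' ↑(consecutiveBlocks m δ idx) := by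
    rw [hA, hB, image_mul_pow_mul_image_mul_pow, coe_consecutiveBlocks idx hm hδ]
  have hroots : ∀ β ∈ A, β ^ n = 1 := by
    rw [hAdef]
    rintro β (⟨j, -, rfl⟩ | ⟨l, rfl⟩) <;> rw [← pow_mul, mul_comm, pow_mul, hα.pow_eq_one, one_pow]
  have hloc : HasLocality (cyclicCodeOn K L n (A * B) : Set (Fin n → K)) (dA - δ + 1) δ :=
    hasLocality_cyclicCodeOn hζ hroots hγ'
      (fun β hβ e he => hB ▸ Set.mul_mem_mul hβ ⟨e, he, rfl⟩) hdA.1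
  have hU := consecutiveBlocks_subset_range hs hδ hlow hupp
  have hUn := (Finset.card_le_card hU).trans_eq (Finset.card_range _)
  rw [card_consecutiveBlocks hlow hgap] at hUn
  have hdim : Module.finrank K (cyclicCodeOn K L n (A * B)) = n - m + 1 - (s + 1) * (δ - 1) := by
    rw [hAB, finrank_cyclicCodeOn_image_mul_pow hζ hγ
      (hU.trans (Finset.range_subset_range.mpr (Nat.sub_le n 1))) (hAB ▸ hcyclo),
      card_consecutiveBlocks hlow hgap, add_one_mul]
    omega
  refine ⟨hloc, hdim, fun hceil => ?_⟩
  have hopt : SingletonOpt n (n - m + 1 - (s + 1) * (δ - 1)) (dA - δ + 1) δ (m + δ - 1) := by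
    rw [SingletonOpt, hceil, Nat.add_sub_cancel, add_one_mul]
    omega
  refine ⟨isMinDist_of_hasLocality hloc (by omega) (by rw [hdim, add_one_mul]; omega)
    (fun c hc hc0 => Nat.le_of_pred_lt ?_) (hdim ▸ hopt), hopt⟩
  exact lt_wt_of_mul_pow_mem hζ hγ
    (fun e he => hAB ▸ ⟨e, Finset.mem_union_left _ (Finset.mem_range.mpr (by omega)), rfl⟩) hc hc0

/-- Theorem 5.9 of the paper: generic construction of optimal cyclic
`(r,δ)`-LRCs of length `n ∣ q + 1` with `δ` odd. -/
theorem stmt15 (K L : Type) [Field K] [Fintype K] [Field L] [Fintype L] [Algebra K L]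
    (n m s b t δ : ℕ)
    (hn : 0 < n) (hm : 0 < m) (hs : 0 < s) (hδ : 2 ≤ δ) (hδodd : Odd δ)
    (hdvd : n ∣ Fintype.card K + 1) (hcop : Nat.Coprime n (Fintype.card K))
    (hcard : Fintype.card L = Fintype.card K ^ 2)
    (hb : Nat.Coprime b n) (ht : t ≤ n - 1)
    (α : L) (hα : IsPrimitiveRoot α n)
    (idx : Fin s → ℕ)
    (hlow : ∀ l : Fin s, m - 1 + δ ≤ idx l) (hupp : ∀ l : Fin s, idx l ≤ n - δ)
    (hgap : ∀ l : Fin s, ∀ hl : (l : ℕ) + 1 < s, idx l + δ ≤ idx ⟨(l : ℕ) + 1, hl⟩)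
    (A B : Set L)
    (hAdef : A = {x : L | ∃ j < m, x = α ^ (t + j * b)} ∪
      {x : L | ∃ l : Fin s, x = α ^ (t + idx l * b)})
    (hBdef : B = {x : L | (∃ e ≤ (δ - 1) / 2, x = α ^ (e * b)) ∨
      (∃ e ≤ (δ - 3) / 2, x = (α ^ (e * b))⁻¹)})
    (hcyclo : ∀ x ∈ A * B, x ^ Fintype.card K ∈ A * B)
    (dA : ℕ)
    (hdA : IsMinDist (dualSet L n (cyclicCode L n A : Set (Fin n → L))) dA) :
    HasLocality (cyclicCodeOn K L n (A * B) : Set (Fin n → K)) (dA - δ + 1) δ ∧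
    Module.finrank K (cyclicCodeOn K L n (A * B)) = n - m + 1 - (s + 1) * (δ - 1) ∧
    (ceilDiv' (n - m + 1 - (s + 1) * (δ - 1)) (dA - δ + 1) = s + 1 →
      IsMinDist (cyclicCodeOn K L n (A * B) : Set (Fin n → K)) (m + δ - 1) ∧
      SingletonOpt n (n - m + 1 - (s + 1) * (δ - 1)) (dA - δ + 1) δ (m + δ - 1)) :=
  stmt15_general K L n m s b t δ hn hm hs hδ hδodd hb α hα idx hlow hupp hgap A B hAdef hBdef hcyclo
    dA hdA
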